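/- arXiv:math/0511234 — 9 statements merged into one kernel-verified Lean document; each statement's English description precedes it below -/
import Mathlib

section
/- In the one-period model, the buyer's value function u^C(x) = sup_{H∈ℝ} E[−e^{−γ(x + H(S_T−S_0) + C(Y_T))}] is given explicitly by u^C(x) = −e^{−γx} · ((p1·e^{−γC_h} + p2·e^{−γC_ℓ})/q)^q · ((p3·e^{−γC_h} + p4·e^{−γC_ℓ})/(1−q))^{1−q}, where q = (1−d)/(u−d). In particular, for C ≡ 0 the Merton value function is u^0(x) = −e^{−γx} · ((p1+p2)/q)^q · ((p3+p4)/(1−q))^{1−q}. -/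
lemma one_period_sup (a b A B c q : ℝ) (ha : 0 < a) (hb : 0 < b) (hA : 0 < A)
    (hB : 0 < B) (hc : 0 < c) (hq : q = b / (a + b)) :
    (⨆ H : ℝ, -(c * (A * Real.exp (-(a * H)) + B * Real.exp (b * H)))) =
      -(c * ((A / q) ^ q * (B / (1 - q)) ^ (1 - q))) := by
  have hab : 0 < a + b := by linarith
  have hq0 : 0 < q := hq ▸ div_pos hb hab
  have hq1 : q < 1 := by rw [hq, div_lt_one hab]; linarith
  have h1q : 0 < 1 - q := by linarith
  set M := (A / q) ^ q * (B / (1 - q)) ^ (1 - q) with hM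
  have hMpos : 0 < M := mul_pos (Real.rpow_pos_of_pos (div_pos hA hq0) _)
    (Real.rpow_pos_of_pos (div_pos hB h1q) _)
  have hqb : b - (a + b) * q = 0 := by rw [hq]; field_simp; ring
  have glhs : ∀ H : ℝ,
      (A * Real.exp (-(a * H)) / q) ^ q * (B * Real.exp (b * H) / (1 - q)) ^ (1 - q) = M := by
    intro H
    have e1 : (0:ℝ) < Real.exp (-(a * H)) := Real.exp_pos _
    have e2 : (0:ℝ) < Real.exp (b * H) := Real.exp_pos _
    have h1 : A * Real.exp (-(a * H)) / q = (A / q) * Real.exp (-(a * H)) := by ring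
    have h2 : B * Real.exp (b * H) / (1 - q) = (B / (1 - q)) * Real.exp (b * H) := by ring
    rw [h1, h2, Real.mul_rpow (div_pos hA hq0).le e1.le,
      Real.mul_rpow (div_pos hB h1q).le e2.le, ← Real.exp_mul, ← Real.exp_mul]
    have h3 : Real.exp (-(a * H) * q) * Real.exp (b * H * (1 - q)) = 1 := by
      rw [← Real.exp_add, show -(a * H) * q + b * H * (1 - q) = H * (b - (a + b) * q) by ring,
        hqb, mul_zero, Real.exp_zero]
    calc (A / q) ^ q * Real.exp (-(a * H) * q) * ((B / (1 - q)) ^ (1 - q) * Real.exp (b * H * (1 - q)))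
        = (A / q) ^ q * (B / (1 - q)) ^ (1 - q) *
          (Real.exp (-(a * H) * q) * Real.exp (b * H * (1 - q))) := by ring
      _ = M := by rw [h3, mul_one]
  have lb : ∀ H : ℝ, M ≤ A * Real.exp (-(a * H)) + B * Real.exp (b * H) := by
    intro H
    have e1 : (0:ℝ) < Real.exp (-(a * H)) := Real.exp_pos _
    have e2 : (0:ℝ) < Real.exp (b * H) := Real.exp_pos _
    have h := Real.geom_mean_le_arith_mean2_weighted hq0.le h1q.le
      (div_pos (mul_pos hA e1) hq0).le (div_pos (mul_pos hB e2) h1q).le (by ring)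
    rw [glhs H] at h
    have hr : q * (A * Real.exp (-(a * H)) / q) + (1 - q) * (B * Real.exp (b * H) / (1 - q))
        = A * Real.exp (-(a * H)) + B * Real.exp (b * H) := by
      field_simp
    linarith [hr ▸ h]
  -- the maximizer
  set H0 : ℝ := Real.log (A * (1 - q) / (B * q)) / (a + b) with hH0
  have hposr : 0 < A * (1 - q) / (B * q) := div_pos (mul_pos hA h1q) (mul_pos hB hq0)
  have hexp0 : Real.exp ((a + b) * H0) = A * (1 - q) / (B * q) := by
    rw [hH0, mul_div_cancel₀ _ hab.ne', Real.exp_log hposr]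
  have heq : A * Real.exp (-(a * H0)) / q = B * Real.exp (b * H0) / (1 - q) := by
    have hsplit : Real.exp (b * H0) = (A * (1 - q) / (B * q)) * Real.exp (-(a * H0)) := by
      rw [← hexp0, ← Real.exp_add]; congr 1; ring
    rw [hsplit]
    field_simp
  set Z := B * Real.exp (b * H0) / (1 - q) with hZ
  have hZpos : 0 < Z := div_pos (mul_pos hB (Real.exp_pos _)) h1q
  have hsumZ : A * Real.exp (-(a * H0)) + B * Real.exp (b * H0) = Z := by
    have h1 : A * Real.exp (-(a * H0)) = q * Z := by
      rw [← heq]; field_simp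
    have h2 : B * Real.exp (b * H0) = (1 - q) * Z := by
      rw [hZ]; field_simp
    rw [h1, h2]; ring
  have hMZ : M = Z := by
    rw [← glhs H0, heq]
    rw [← Real.rpow_add hZpos]
    norm_num
  apply le_antisymm
  · apply ciSup_le
    intro H
    exact neg_le_neg (mul_le_mul_of_nonneg_left (lb H) hc.le)
  · have hbdd : BddAbove (Set.range fun H : ℝ =>
        -(c * (A * Real.exp (-(a * H)) + B * Real.exp (b * H)))) := by
      refine ⟨-(c * M), ?_⟩
      rintro y ⟨H, rfl⟩
      exact neg_le_neg (mul_le_mul_of_nonneg_left (lb H) hc.le)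
    have : -(c * M) = -(c * (A * Real.exp (-(a * H0)) + B * Real.exp (b * H0))) := by
      rw [hsumZ, hMZ]
    rw [this]
    exact le_ciSup hbdd H0

/-- In the one-period model, the buyer's value function
`u^C(x) = sup_{H∈ℝ} E[−e^{−γ(x + H(S_T−S_0) + C(Y_T))}]` is given explicitly by
`u^C(x) = −e^{−γx} · ((p1·e^{−γC_h}+p2·e^{−γC_ℓ})/q)^q · ((p3·e^{−γC_h}+p4·e^{−γC_ℓ})/(1−q))^{1−q}`
with `q = (1−d)/(u−d)`; in particular, for `C ≡ 0` the Merton value function is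
`u^0(x) = −e^{−γx} · ((p1+p2)/q)^q · ((p3+p4)/(1−q))^{1−q}`. -/
theorem buyer_value_function_one_period
    (S0 u d γ p1 p2 p3 p4 Ch Cl q x : ℝ)
    (hS0 : 0 < S0) (hd0 : 0 < d) (hd1 : d < 1) (hu : 1 < u) (hγ : 0 < γ)
    (hp1 : 0 < p1) (hp2 : 0 < p2) (hp3 : 0 < p3) (hp4 : 0 < p4)
    (hsum : p1 + p2 + p3 + p4 = 1)
    (hq : q = (1 - d) / (u - d)) :
    (⨆ H : ℝ,
        (p1 * -Real.exp (-(γ * (x + H * (u * S0 - S0) + Ch))) +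
         p2 * -Real.exp (-(γ * (x + H * (u * S0 - S0) + Cl))) +
         p3 * -Real.exp (-(γ * (x + H * (d * S0 - S0) + Ch))) +
         p4 * -Real.exp (-(γ * (x + H * (d * S0 - S0) + Cl))))) =
      -Real.exp (-(γ * x)) *
        ((p1 * Real.exp (-(γ * Ch)) + p2 * Real.exp (-(γ * Cl))) / q) ^ q *
        ((p3 * Real.exp (-(γ * Ch)) + p4 * Real.exp (-(γ * Cl))) / (1 - q)) ^ (1 - q) ∧
    (⨆ H : ℝ,
        (p1 * -Real.exp (-(γ * (x + H * (u * S0 - S0)))) +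
         p2 * -Real.exp (-(γ * (x + H * (u * S0 - S0)))) +
         p3 * -Real.exp (-(γ * (x + H * (d * S0 - S0)))) +
         p4 * -Real.exp (-(γ * (x + H * (d * S0 - S0)))))) =
      -Real.exp (-(γ * x)) *
        ((p1 + p2) / q) ^ q * ((p3 + p4) / (1 - q)) ^ (1 - q) := by
  have ha : 0 < γ * (u * S0 - S0) := by
    have h1 : 0 < (u - 1) * S0 := mul_pos (by linarith) hS0
    nlinarith
  have hb : 0 < γ * (S0 - d * S0) := by
    have h1 : 0 < (1 - d) * S0 := mul_pos (by linarith) hS0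
    nlinarith
  have hc : 0 < Real.exp (-(γ * x)) := Real.exp_pos _
  have hqab : q = γ * (S0 - d * S0) / (γ * (u * S0 - S0) + γ * (S0 - d * S0)) := by
    rw [hq]
    have h1 : (0:ℝ) < u - d := by linarith
    have h2 : 0 < γ * (u * S0 - S0) + γ * (S0 - d * S0) := by linarith
    rw [div_eq_div_iff h1.ne' h2.ne']
    ring
  constructor
  · have key : (⨆ H : ℝ,
        (p1 * -Real.exp (-(γ * (x + H * (u * S0 - S0) + Ch))) +
         p2 * -Real.exp (-(γ * (x + H * (u * S0 - S0) + Cl))) +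
         p3 * -Real.exp (-(γ * (x + H * (d * S0 - S0) + Ch))) +
         p4 * -Real.exp (-(γ * (x + H * (d * S0 - S0) + Cl))))) =
        ⨆ H : ℝ, -(Real.exp (-(γ * x)) *
          ((p1 * Real.exp (-(γ * Ch)) + p2 * Real.exp (-(γ * Cl))) *
              Real.exp (-(γ * (u * S0 - S0) * H)) +
           (p3 * Real.exp (-(γ * Ch)) + p4 * Real.exp (-(γ * Cl))) *
              Real.exp (γ * (S0 - d * S0) * H))) := by
      congr 1; funext H
      rw [show -(γ * (x + H * (u * S0 - S0) + Ch)) =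
            -(γ * x) + -(γ * (u * S0 - S0) * H) + -(γ * Ch) by ring,
          show -(γ * (x + H * (u * S0 - S0) + Cl)) =
            -(γ * x) + -(γ * (u * S0 - S0) * H) + -(γ * Cl) by ring,
          show -(γ * (x + H * (d * S0 - S0) + Ch)) =
            -(γ * x) + γ * (S0 - d * S0) * H + -(γ * Ch) by ring,
          show -(γ * (x + H * (d * S0 - S0) + Cl)) =
            -(γ * x) + γ * (S0 - d * S0) * H + -(γ * Cl) by ring]
      simp only [Real.exp_add]
      ring
    rw [key, one_period_sup (γ * (u * S0 - S0)) (γ * (S0 - d * S0))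
      (p1 * Real.exp (-(γ * Ch)) + p2 * Real.exp (-(γ * Cl)))
      (p3 * Real.exp (-(γ * Ch)) + p4 * Real.exp (-(γ * Cl)))
      (Real.exp (-(γ * x))) q ha hb (by positivity) (by positivity) hc hqab]
    ring
  · have key : (⨆ H : ℝ,
        (p1 * -Real.exp (-(γ * (x + H * (u * S0 - S0)))) +
         p2 * -Real.exp (-(γ * (x + H * (u * S0 - S0)))) +
         p3 * -Real.exp (-(γ * (x + H * (d * S0 - S0)))) +
         p4 * -Real.exp (-(γ * (x + H * (d * S0 - S0)))))) =
        ⨆ H : ℝ, -(Real.exp (-(γ * x)) *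
          ((p1 + p2) * Real.exp (-(γ * (u * S0 - S0) * H)) +
           (p3 + p4) * Real.exp (γ * (S0 - d * S0) * H))) := by
      congr 1; funext H
      rw [show -(γ * (x + H * (u * S0 - S0))) =
            -(γ * x) + -(γ * (u * S0 - S0) * H) by ring,
          show -(γ * (x + H * (d * S0 - S0))) =
            -(γ * x) + γ * (S0 - d * S0) * H by ring]
      simp only [Real.exp_add]
      ring
    rw [key, one_period_sup (γ * (u * S0 - S0)) (γ * (S0 - d * S0))
      (p1 + p2) (p3 + p4) (Real.exp (-(γ * x))) q ha hb (by positivity) (by positivity) hc hqab]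
    ring
end

section
/- In the one-period model, for any initial wealth x ∈ ℝ, the equation u^0(x) = u^C(x − π) has a unique solution π (independent of x), namely the indifference price π^C = g_γ(C_h, C_ℓ), where g_γ(x1,x2) = (q/γ)·log((p1+p2)/(p1·e^{−γx1}+p2·e^{−γx2})) + ((1−q)/γ)·log((p3+p4)/(p3·e^{−γx1}+p4·e^{−γx2})) and q = (1−d)/(u−d). -/
lemma key_sup (A B a b q : ℝ) (hA : 0 < A) (hB : 0 < B) (ha : 0 < a) (hb : 0 < b)
    (hq : q = b / (a + b)) :
    (⨆ H : ℝ, -(A * Real.exp (-(a * H)) + B * Real.exp (b * H))) =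
      -Real.exp (q * Real.log (A / q) + (1 - q) * Real.log (B / (1 - q))) := by
  have hab : 0 < a + b := by linarith
  have hq0 : 0 < q := by rw [hq]; positivity
  have hq1 : q < 1 := by rw [hq, div_lt_one hab]; linarith
  have hq1' : 0 < 1 - q := by linarith
  set s : ℝ → ℝ := fun H => Real.log (A / q) - a * H with hs
  set t : ℝ → ℝ := fun H => Real.log (B / (1 - q)) + b * H with ht
  have hrw : ∀ H : ℝ, A * Real.exp (-(a * H)) + B * Real.exp (b * H)
      = q * Real.exp (s H) + (1 - q) * Real.exp (t H) := by
    intro H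
    have h1 : Real.exp (s H) = (A / q) * Real.exp (-(a * H)) := by
      simp only [hs, sub_eq_add_neg, Real.exp_add,
        Real.exp_log (show (0:ℝ) < A / q by positivity)]
    have h2 : Real.exp (t H) = (B / (1 - q)) * Real.exp (b * H) := by
      simp only [ht, Real.exp_add, Real.exp_log (show (0:ℝ) < B / (1 - q) by positivity)]
    rw [h1, h2]
    field_simp
  set F : ℝ := q * Real.log (A / q) + (1 - q) * Real.log (B / (1 - q)) with hF
  have hqa : q * a = (1 - q) * b := by rw [hq]; field_simp; ring
  have hexp : ∀ H : ℝ, q * s H + (1 - q) * t H = F := by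
    intro H
    simp only [hs, ht, hF]
    linear_combination (-H) * hqa
  have hbound : ∀ H : ℝ, -(A * Real.exp (-(a * H)) + B * Real.exp (b * H)) ≤ -Real.exp F := by
    intro H
    rw [hrw H]
    have := convexOn_exp.2 (Set.mem_univ (s H)) (Set.mem_univ (t H)) hq0.le hq1'.le (by ring)
    simp only [smul_eq_mul] at this
    rw [← hexp H]
    linarith
  have hattain : ∃ H : ℝ, -(A * Real.exp (-(a * H)) + B * Real.exp (b * H)) = -Real.exp F := by
    refine ⟨(Real.log (A / q) - Real.log (B / (1 - q))) / (a + b), ?_⟩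
    set H0 := (Real.log (A / q) - Real.log (B / (1 - q))) / (a + b)
    have hst : s H0 = t H0 := by
      simp only [hs, ht, H0]
      field_simp
      ring
    have hFt : F = t H0 := by rw [← hexp H0, hst]; ring
    rw [hrw H0, hst, hFt]
    ring
  obtain ⟨H0, hH0⟩ := hattain
  apply le_antisymm
  · exact ciSup_le hbound
  · rw [← hH0]
    exact le_ciSup ⟨-Real.exp F, fun y ⟨H, hH⟩ => hH ▸ hbound H⟩ H0

/-- The indifference-price function `g_γ(x1, x2)` of the one-period model. -/
noncomputable def indiffPrice (p1 p2 p3 p4 q γ x1 x2 : ℝ) : ℝ :=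
  (q / γ) * Real.log ((p1 + p2) / (p1 * Real.exp (-(γ * x1)) + p2 * Real.exp (-(γ * x2)))) +
  ((1 - q) / γ) * Real.log ((p3 + p4) / (p3 * Real.exp (-(γ * x1)) + p4 * Real.exp (-(γ * x2))))

/-- In the one-period model, for any initial wealth `x`, the equation
`u^0(x) = u^C(x − π)` has a unique solution `π` (independent of `x`), namely the
indifference price `π^C = g_γ(C_h, C_ℓ)` with `q = (1−d)/(u−d)`. -/
theorem indifference_price_unique_solution
    (S0 u d γ p1 p2 p3 p4 Ch Cl q : ℝ)
    (hS0 : 0 < S0) (hd0 : 0 < d) (hd1 : d < 1) (hu : 1 < u) (hγ : 0 < γ)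
    (hp1 : 0 < p1) (hp2 : 0 < p2) (hp3 : 0 < p3) (hp4 : 0 < p4)
    (hsum : p1 + p2 + p3 + p4 = 1)
    (hq : q = (1 - d) / (u - d))
    (u0 uC : ℝ → ℝ)
    (hu0 : u0 = fun x : ℝ => ⨆ H : ℝ,
      (p1 * -Real.exp (-(γ * (x + H * (u * S0 - S0)))) +
       p2 * -Real.exp (-(γ * (x + H * (u * S0 - S0)))) +
       p3 * -Real.exp (-(γ * (x + H * (d * S0 - S0)))) +
       p4 * -Real.exp (-(γ * (x + H * (d * S0 - S0))))))
    (huC : uC = fun x : ℝ => ⨆ H : ℝ,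
      (p1 * -Real.exp (-(γ * (x + H * (u * S0 - S0) + Ch))) +
       p2 * -Real.exp (-(γ * (x + H * (u * S0 - S0) + Cl))) +
       p3 * -Real.exp (-(γ * (x + H * (d * S0 - S0) + Ch))) +
       p4 * -Real.exp (-(γ * (x + H * (d * S0 - S0) + Cl))))) :
    ∀ x π : ℝ, u0 x = uC (x - π) ↔ π = indiffPrice p1 p2 p3 p4 q γ Ch Cl := by
  intro x π
  have hud : 0 < u - d := by linarith
  have ha : 0 < γ * (u * S0 - S0) := by
    have : 0 < u * S0 - S0 := by nlinarith
    positivity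
  have hb : 0 < γ * (S0 - d * S0) := by
    have : 0 < S0 - d * S0 := by nlinarith
    positivity
  have hqab : q = γ * (S0 - d * S0) / (γ * (u * S0 - S0) + γ * (S0 - d * S0)) := by
    rw [hq]
    rw [div_eq_div_iff (by positivity) (by positivity)]
    ring
  have hq0 : 0 < q := by rw [hqab]; positivity
  have hq1 : q < 1 := by
    rw [hqab, div_lt_one (by positivity)]; linarith
  have hq1' : 0 < 1 - q := by linarith
  -- abbreviations
  set P : ℝ := p1 + p2 with hP
  set Q : ℝ := p3 + p4 with hQ
  set Pc : ℝ := p1 * Real.exp (-(γ * Ch)) + p2 * Real.exp (-(γ * Cl)) with hPc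
  set Qc : ℝ := p3 * Real.exp (-(γ * Ch)) + p4 * Real.exp (-(γ * Cl)) with hQc
  have hP0 : 0 < P := by rw [hP]; positivity
  have hQ0 : 0 < Q := by rw [hQ]; positivity
  have hPc0 : 0 < Pc := by rw [hPc]; positivity
  have hQc0 : 0 < Qc := by rw [hQc]; positivity
  -- value of u0 at x
  have hu0x : u0 x =
      -Real.exp (q * Real.log (P * Real.exp (-(γ * x)) / q)
        + (1 - q) * Real.log (Q * Real.exp (-(γ * x)) / (1 - q))) := by
    rw [hu0]
    dsimp only
    calc (⨆ H : ℝ,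
        (p1 * -Real.exp (-(γ * (x + H * (u * S0 - S0)))) +
         p2 * -Real.exp (-(γ * (x + H * (u * S0 - S0)))) +
         p3 * -Real.exp (-(γ * (x + H * (d * S0 - S0)))) +
         p4 * -Real.exp (-(γ * (x + H * (d * S0 - S0)))))) =
        ⨆ H : ℝ, -((P * Real.exp (-(γ * x))) * Real.exp (-(γ * (u * S0 - S0) * H))
          + (Q * Real.exp (-(γ * x))) * Real.exp (γ * (S0 - d * S0) * H)) := by
          apply iSup_congr
          intro H
          rw [show -(γ * (x + H * (u * S0 - S0))) = -(γ * x) + -(γ * (u * S0 - S0) * H) by ring,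
              show -(γ * (x + H * (d * S0 - S0))) = -(γ * x) + γ * (S0 - d * S0) * H by ring,
              hP, hQ]
          simp only [Real.exp_add]
          ring
      _ = _ := key_sup _ _ _ _ q (by positivity) (by positivity) ha hb hqab
  -- value of uC at x - π
  have huCx : uC (x - π) =
      -Real.exp (q * Real.log (Pc * Real.exp (-(γ * (x - π))) / q)
        + (1 - q) * Real.log (Qc * Real.exp (-(γ * (x - π))) / (1 - q))) := by
    rw [huC]
    dsimp only
    calc (⨆ H : ℝ,
        (p1 * -Real.exp (-(γ * (x - π + H * (u * S0 - S0) + Ch))) +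
         p2 * -Real.exp (-(γ * (x - π + H * (u * S0 - S0) + Cl))) +
         p3 * -Real.exp (-(γ * (x - π + H * (d * S0 - S0) + Ch))) +
         p4 * -Real.exp (-(γ * (x - π + H * (d * S0 - S0) + Cl))))) =
        ⨆ H : ℝ, -((Pc * Real.exp (-(γ * (x - π)))) * Real.exp (-(γ * (u * S0 - S0) * H))
          + (Qc * Real.exp (-(γ * (x - π)))) * Real.exp (γ * (S0 - d * S0) * H)) := by
          apply iSup_congr
          intro H
          rw [show -(γ * (x - π + H * (u * S0 - S0) + Ch))
                = -(γ * Ch) + (-(γ * (x - π)) + -(γ * (u * S0 - S0) * H)) by ring,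
              show -(γ * (x - π + H * (u * S0 - S0) + Cl))
                = -(γ * Cl) + (-(γ * (x - π)) + -(γ * (u * S0 - S0) * H)) by ring,
              show -(γ * (x - π + H * (d * S0 - S0) + Ch))
                = -(γ * Ch) + (-(γ * (x - π)) + γ * (S0 - d * S0) * H) by ring,
              show -(γ * (x - π + H * (d * S0 - S0) + Cl))
                = -(γ * Cl) + (-(γ * (x - π)) + γ * (S0 - d * S0) * H) by ring,
              hPc, hQc]
          simp only [Real.exp_add]
          ring
      _ = _ := key_sup _ _ _ _ q (by positivity) (by positivity) ha hb hqab
  have L : ∀ (c e w : ℝ), 0 < c → 0 < e →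
      Real.log (c * Real.exp w / e) = Real.log c + w - Real.log e := by
    intro c e w hc he
    rw [Real.log_div (by positivity) (ne_of_gt he),
        Real.log_mul (ne_of_gt hc) (Real.exp_ne_zero w), Real.log_exp]
  rw [hu0x, huCx, neg_inj, Real.exp_eq_exp, indiffPrice]
  rw [L _ _ _ hP0 hq0, L _ _ _ hQ0 hq1', L _ _ _ hPc0 hq0, L _ _ _ hQc0 hq1',
      Real.log_div (ne_of_gt hP0) (ne_of_gt hPc0),
      Real.log_div (ne_of_gt hQ0) (ne_of_gt hQc0)]
  have hγ' : γ ≠ 0 := ne_of_gt hγ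
  have hI : γ * ((q / γ) * (Real.log P - Real.log Pc)
      + ((1 - q) / γ) * (Real.log Q - Real.log Qc))
      = q * (Real.log P - Real.log Pc) + (1 - q) * (Real.log Q - Real.log Qc) := by
    field_simp
  constructor
  · intro h
    have h2 : γ * π = q * (Real.log P - Real.log Pc)
        + (1 - q) * (Real.log Q - Real.log Qc) := by linear_combination -h
    field_simp
    linear_combination h2
  · intro h
    rw [h]
    linear_combination -hI
end

section
/- In the one-period model, the excess hedge needed to account for the claim, i.e., the difference between the optimal hedge H^C with the claim and the Merton hedge H^0 without it, is given explicitly by H^C − H^0 = (1/(γ(u−d)S_0)) · log[ (p1·e^{−γC_h} + p2·e^{−γC_ℓ})·(p3+p4) / ((p3·e^{−γC_h} + p4·e^{−γC_ℓ})·(p1+p2)) ], where H^C is the unique minimizer of H ↦ (p1e^{−γC_h}+p2e^{−γC_ℓ})e^{−γH(u−1)S_0} + (p3e^{−γC_h}+p4e^{−γC_ℓ})e^{γH(1−d)S_0} and H^0 is the unique minimizer of the same expression with C_h = C_ℓ = 0. -/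
lemma min_exp_unique (A B a b : ℝ) (hA : 0 < A) (hB : 0 < B) (ha : 0 < a) (hb : 0 < b)
    (Hs : ℝ)
    (hmin : ∀ H : ℝ, A * Real.exp (-(a * Hs)) + B * Real.exp (b * Hs)
      ≤ A * Real.exp (-(a * H)) + B * Real.exp (b * H)) :
    Hs = Real.log (a * A / (b * B)) / (a + b) := by
  set H₀ := Real.log (a * A / (b * B)) / (a + b) with hH₀
  have hab : 0 < a + b := by linarith
  have hratio : 0 < a * A / (b * B) := by positivity
  have hexp : Real.exp ((a + b) * H₀) = a * A / (b * B) := by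
    rw [hH₀, mul_div_cancel₀ _ hab.ne', Real.exp_log hratio]
  have hkey : a * A * Real.exp (-(a * H₀)) = b * B * Real.exp (b * H₀) := by
    have h1 : Real.exp (-(a * H₀)) = (Real.exp ((a+b)*H₀))⁻¹ * Real.exp (b * H₀) := by
      rw [← Real.exp_neg, ← Real.exp_add]; ring_nf
    rw [h1, hexp]
    field_simp
  by_contra hne
  have hs : Hs - H₀ ≠ 0 := fun h => hne (by linarith [sub_eq_zero.mp h])
  -- strict inequality: f H₀ < f Hs
  have hlt : A * Real.exp (-(a * H₀)) + B * Real.exp (b * H₀)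
      < A * Real.exp (-(a * Hs)) + B * Real.exp (b * Hs) := by
    set s := Hs - H₀ with hsdef
    have e1 : Real.exp (-(a * Hs)) = Real.exp (-(a * H₀)) * Real.exp (-(a * s)) := by
      rw [← Real.exp_add, hsdef]; ring_nf
    have e2 : Real.exp (b * Hs) = Real.exp (b * H₀) * Real.exp (b * s) := by
      rw [← Real.exp_add, hsdef]; ring_nf
    have g1 : -(a*s) + 1 < Real.exp (-(a*s)) :=
      Real.add_one_lt_exp (by intro h; exact hs (by
        have : a * s = 0 := by linarith [neg_eq_zero.mp h]
        exact (mul_eq_zero.mp this).resolve_left ha.ne'))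
    have g2 : b*s + 1 < Real.exp (b*s) :=
      Real.add_one_lt_exp (fun h => hs ((mul_eq_zero.mp h).resolve_left hb.ne'))
    have pA : 0 < A * Real.exp (-(a * H₀)) := by positivity
    have pB : 0 < B * Real.exp (b * H₀) := by positivity
    rw [e1, e2]
    have h1 : A * Real.exp (-(a * H₀)) * (-(a*s) + 1) < A * Real.exp (-(a * H₀)) * Real.exp (-(a*s)) :=
      by exact mul_lt_mul_of_pos_left g1 pA
    have h2 : B * Real.exp (b * H₀) * (b*s + 1) < B * Real.exp (b * H₀) * Real.exp (b*s) :=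
      by exact mul_lt_mul_of_pos_left g2 pB
    have h3 : A * Real.exp (-(a * H₀)) * (-(a*s)+1) + B * Real.exp (b * H₀) * (b*s+1)
        = A * Real.exp (-(a * H₀)) + B * Real.exp (b * H₀) := by
      linear_combination (-s) * hkey
    linarith
  exact absurd (hmin H₀) (not_le.mpr hlt)




/-- In the one-period model, the excess hedge `H^C − H^0`, where `H^C`
minimizes the expected disutility with the claim and `H^0` is the Merton hedge
(minimizer with `C_h = C_ℓ = 0`), is given explicitly by
`H^C − H^0 = (1/(γ(u−d)S0)) · log[ (p1e^{−γC_h}+p2e^{−γC_ℓ})(p3+p4) / ((p3e^{−γC_h}+p4e^{−γC_ℓ})(p1+p2)) ]`. -/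
theorem excess_hedge_formula
    (S0 u d γ p1 p2 p3 p4 Ch Cl : ℝ)
    (hS0 : 0 < S0) (hd0 : 0 < d) (hd1 : d < 1) (hu : 1 < u) (hγ : 0 < γ)
    (hp1 : 0 < p1) (hp2 : 0 < p2) (hp3 : 0 < p3) (hp4 : 0 < p4)
    (hsum : p1 + p2 + p3 + p4 = 1)
    (fC f0 : ℝ → ℝ)
    (hfC : fC = fun H : ℝ =>
      (p1 * Real.exp (-(γ * Ch)) + p2 * Real.exp (-(γ * Cl))) *
        Real.exp (-(γ * H * (u - 1) * S0)) +
      (p3 * Real.exp (-(γ * Ch)) + p4 * Real.exp (-(γ * Cl))) *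
        Real.exp (γ * H * (1 - d) * S0))
    (hf0 : f0 = fun H : ℝ =>
      (p1 + p2) * Real.exp (-(γ * H * (u - 1) * S0)) +
      (p3 + p4) * Real.exp (γ * H * (1 - d) * S0))
    (HC H0 : ℝ)
    (hHC : ∀ H : ℝ, fC HC ≤ fC H)
    (hH0 : ∀ H : ℝ, f0 H0 ≤ f0 H) :
    HC - H0 = (1 / (γ * (u - d) * S0)) *
      Real.log ((p1 * Real.exp (-(γ * Ch)) + p2 * Real.exp (-(γ * Cl))) * (p3 + p4) /
        ((p3 * Real.exp (-(γ * Ch)) + p4 * Real.exp (-(γ * Cl))) * (p1 + p2))) := by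
  set a := γ * (u - 1) * S0 with hadef
  set b := γ * (1 - d) * S0 with hbdef
  set AC := p1 * Real.exp (-(γ * Ch)) + p2 * Real.exp (-(γ * Cl)) with hACdef
  set BC := p3 * Real.exp (-(γ * Ch)) + p4 * Real.exp (-(γ * Cl)) with hBCdef
  have hu1 : 0 < u - 1 := by linarith
  have hd1' : 0 < 1 - d := by linarith
  have hud : 0 < u - d := by linarith
  have ha : 0 < a := by rw [hadef]; positivity
  have hb : 0 < b := by rw [hbdef]; positivity
  have hAC : 0 < AC := by rw [hACdef]; positivity
  have hBC : 0 < BC := by rw [hBCdef]; positivity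
  have hA0 : 0 < p1 + p2 := by linarith
  have hB0 : 0 < p3 + p4 := by linarith
  have eC : HC = Real.log (a * AC / (b * BC)) / (a + b) := by
    apply min_exp_unique AC BC a b hAC hBC ha hb
    intro H
    have h := hHC H
    rw [hfC] at h
    simp only [hadef, hbdef, hACdef, hBCdef]
    simp only [hACdef, hBCdef] at h
    ring_nf at h ⊢
    exact h
  have e0 : H0 = Real.log (a * (p1 + p2) / (b * (p3 + p4))) / (a + b) := by
    apply min_exp_unique (p1 + p2) (p3 + p4) a b hA0 hB0 ha hb
    intro H
    have h := hH0 H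
    rw [hf0] at h
    simp only [hadef, hbdef]
    ring_nf at h ⊢
    exact h
  have hab : a + b = γ * (u - d) * S0 := by rw [hadef, hbdef]; ring
  have hX : (0:ℝ) < a * AC / (b * BC) := by positivity
  have hY : (0:ℝ) < a * (p1 + p2) / (b * (p3 + p4)) := by positivity
  rw [eC, e0, div_sub_div_same, ← Real.log_div hX.ne' hY.ne', hab, one_div,
    inv_mul_eq_div, div_left_inj' (by positivity : γ * (u - d) * S0 ≠ 0)]
  congr 1
  field_simp
end

section
/- For all x1, x2 ∈ ℝ, the limit of the indifference price as risk aversion tends to zero is the expectation under the minimal martingale measure: lim_{γ → 0+} g_γ(x1, x2) = (q̃1 + q̃3)·x1 + (q̃2 + q̃4)·x2, where q̃1 = q·p1/(p1+p2), q̃2 = q·p2/(p1+p2), q̃3 = (1−q)·p3/(p3+p4), q̃4 = (1−q)·p4/(p3+p4). -/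
open Filter

lemma key_slope (a b x1 x2 : ℝ) (ha : 0 < a) (hb : 0 < b) :
    Tendsto (fun γ : ℝ => (1 / γ) *
        Real.log ((a + b) / (a * Real.exp (-(γ * x1)) + b * Real.exp (-(γ * x2)))))
      (nhdsWithin 0 (Set.Ioi 0)) (nhds ((a * x1 + b * x2) / (a + b))) := by
  set h : ℝ → ℝ := fun γ => a * Real.exp (-(γ * x1)) + b * Real.exp (-(γ * x2)) with hh
  have hpos : ∀ γ, 0 < h γ := fun γ => by positivity
  have hd1 : HasDerivAt (fun γ : ℝ => -(γ * x1)) (-x1) 0 := by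
    simpa using ((hasDerivAt_id (0:ℝ)).mul_const x1).fun_neg
  have hd2 : HasDerivAt (fun γ : ℝ => -(γ * x2)) (-x2) 0 := by
    simpa using ((hasDerivAt_id (0:ℝ)).mul_const x2).fun_neg
  have hdh : HasDerivAt h (a * (-x1) + b * (-x2)) 0 := by
    have := ((hd1.exp.const_mul a).fun_add (hd2.exp.const_mul b))
    simpa [hh, mul_comm] using this
  have h0 : h 0 = a + b := by simp [hh]
  have hlog : HasDerivAt (fun γ => Real.log (h γ))
      ((a * (-x1) + b * (-x2)) / (a + b)) 0 := by
    simpa [h0] using hdh.log (by rw [h0]; positivity)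
  have hf : HasDerivAt (fun γ => Real.log (a + b) - Real.log (h γ))
      ((a * x1 + b * x2) / (a + b)) 0 := by
    have := (hasDerivAt_const (0:ℝ) (Real.log (a+b))).fun_sub hlog
    rw [show (a * x1 + b * x2) / (a + b) = 0 - (a * -x1 + b * -x2) / (a + b) by ring]
    exact this
  have hs := hasDerivAt_iff_tendsto_slope.mp hf
  have hs2 : Tendsto (slope (fun γ => Real.log (a + b) - Real.log (h γ)) 0)
      (nhdsWithin 0 (Set.Ioi 0)) (nhds ((a * x1 + b * x2) / (a + b))) :=
    hs.mono_left (nhdsWithin_mono 0 (fun x hx => ne_of_gt hx))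
  refine hs2.congr (fun γ => ?_)
  have : Real.log ((a + b) / h γ) = Real.log (a + b) - Real.log (h γ) :=
    Real.log_div (by positivity) (ne_of_gt (hpos γ))
  simp only [slope_def_field, h0, sub_self, sub_zero, hh]
  rw [this]
  simp only [hh, zero_mul, neg_zero, Real.exp_zero, mul_one, sub_self, sub_zero]
  ring

/-- The limit of the indifference price as risk aversion tends to zero
(from the right) is the expectation under the minimal martingale measure:
`lim_{γ→0+} g_γ(x1,x2) = (q̃1+q̃3)·x1 + (q̃2+q̃4)·x2`, with
`q̃1 = q·p1/(p1+p2)`, `q̃2 = q·p2/(p1+p2)`, `q̃3 = (1−q)·p3/(p3+p4)`,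
`q̃4 = (1−q)·p4/(p3+p4)`. -/
theorem indiff_price_zero_risk_aversion_limit
    (u d q p1 p2 p3 p4 : ℝ)
    (hd0 : 0 < d) (hd1 : d < 1) (hu : 1 < u)
    (hp1 : 0 < p1) (hp2 : 0 < p2) (hp3 : 0 < p3) (hp4 : 0 < p4)
    (hsum : p1 + p2 + p3 + p4 = 1)
    (hq : q = (1 - d) / (u - d))
    (q1 q2 q3 q4 : ℝ)
    (hq1 : q1 = q * p1 / (p1 + p2)) (hq2 : q2 = q * p2 / (p1 + p2))
    (hq3 : q3 = (1 - q) * p3 / (p3 + p4)) (hq4 : q4 = (1 - q) * p4 / (p3 + p4)) :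
    ∀ x1 x2 : ℝ,
      Tendsto (fun γ : ℝ => indiffPrice p1 p2 p3 p4 q γ x1 x2)
        (nhdsWithin 0 (Set.Ioi 0))
        (nhds ((q1 + q3) * x1 + (q2 + q4) * x2)) := by
  intro x1 x2
  have h1 := (key_slope p1 p2 x1 x2 hp1 hp2).const_mul q
  have h2 := (key_slope p3 p4 x1 x2 hp3 hp4).const_mul (1 - q)
  have hlim := h1.add h2
  have heq : (q1 + q3) * x1 + (q2 + q4) * x2 =
      q * ((p1 * x1 + p2 * x2) / (p1 + p2)) + (1 - q) * ((p3 * x1 + p4 * x2) / (p3 + p4)) := by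
    subst hq1 hq2 hq3 hq4
    field_simp
    ring
  rw [heq]
  refine hlim.congr (fun γ => ?_)
  unfold indiffPrice
  ring
end

section
/- For fixed x1, x2 ≥ 0, the indifference price γ ↦ g_γ(x1, x2) is an antitone (non-increasing) function of the risk aversion γ on (0, ∞). -/
lemma aux_certainty_equiv_anti (a b x1 x2 : ℝ) (ha : 0 < a) (hb : 0 < b)
    (hx1 : 0 ≤ x1) (hx2 : 0 ≤ x2) {γ δ : ℝ} (hγ : 0 < γ) (hγδ : γ ≤ δ) :
    (1/δ) * Real.log ((a+b)/(a * Real.exp (-(δ*x1)) + b * Real.exp (-(δ*x2)))) ≤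
    (1/γ) * Real.log ((a+b)/(a * Real.exp (-(γ*x1)) + b * Real.exp (-(γ*x2)))) := by
  have hδ : 0 < δ := lt_of_lt_of_le hγ hγδ
  set t := γ/δ with ht
  have ht0 : 0 < t := div_pos hγ hδ
  have ht1 : t ≤ 1 := (div_le_one hδ).2 hγδ
  set z1 := Real.exp (-(δ*x1)) with hz1def
  set z2 := Real.exp (-(δ*x2)) with hz2def
  have hz1 : 0 < z1 := Real.exp_pos _
  have hz2 : 0 < z2 := Real.exp_pos _
  have hab : 0 < a + b := by linarith
  have he1 : Real.exp (-(γ*x1)) = z1 ^ t := by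
    rw [hz1def, Real.rpow_def_of_pos (Real.exp_pos _), Real.log_exp, ht]
    congr 1
    field_simp
  have he2 : Real.exp (-(γ*x2)) = z2 ^ t := by
    rw [hz2def, Real.rpow_def_of_pos (Real.exp_pos _), Real.log_exp, ht]
    congr 1
    field_simp
  set S := a * z1 + b * z2 with hS
  have hSpos : 0 < S := by positivity
  -- concavity of rpow gives the key inequality
  have key : a * z1 ^ t + b * z2 ^ t ≤ (a+b) * (S/(a+b)) ^ t := by
    have hcon := (Real.concaveOn_rpow ht0.le ht1).2
      (Set.mem_Ici.2 hz1.le) (Set.mem_Ici.2 hz2.le)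
      (by positivity : (0:ℝ) ≤ a/(a+b)) (by positivity : (0:ℝ) ≤ b/(a+b))
      (by field_simp)
    simp only [smul_eq_mul] at hcon
    have h1 : a/(a+b) * z1 + b/(a+b) * z2 = S/(a+b) := by field_simp [hS]; exact hS.symm
    rw [h1] at hcon
    calc a * z1 ^ t + b * z2 ^ t
        = (a+b) * (a/(a+b) * z1 ^ t + b/(a+b) * z2 ^ t) := by field_simp
      _ ≤ (a+b) * (S/(a+b)) ^ t := by
          exact mul_le_mul_of_nonneg_left hcon hab.le
  have hSγpos : 0 < a * z1 ^ t + b * z2 ^ t := by positivity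
  have hlog : Real.log (a * z1 ^ t + b * z2 ^ t) - Real.log (a+b)
      ≤ t * (Real.log S - Real.log (a+b)) := by
    have h2 : Real.log (a * z1 ^ t + b * z2 ^ t) ≤ Real.log ((a+b) * (S/(a+b)) ^ t) :=
      Real.log_le_log hSγpos key
    rw [Real.log_mul (ne_of_gt hab) (ne_of_gt (Real.rpow_pos_of_pos (by positivity) t)),
      Real.log_rpow (by positivity), Real.log_div (ne_of_gt hSpos) (ne_of_gt hab)] at h2
    linarith
  rw [he1, he2]
  rw [Real.log_div (ne_of_gt hab) (ne_of_gt hSγpos),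
    Real.log_div (ne_of_gt hab) (ne_of_gt hSpos)]
  rw [one_div_mul_eq_div, one_div_mul_eq_div, div_le_div_iff₀ hδ hγ]
  have htγδ : δ * t = γ := by rw [ht]; field_simp
  have h3 : δ * ((Real.log (a * z1 ^ t + b * z2 ^ t)) - Real.log (a+b))
      ≤ γ * (Real.log S - Real.log (a+b)) := by
    calc δ * ((Real.log (a * z1 ^ t + b * z2 ^ t)) - Real.log (a+b))
        ≤ δ * (t * (Real.log S - Real.log (a+b))) :=
          mul_le_mul_of_nonneg_left hlog hδ.le
      _ = γ * (Real.log S - Real.log (a+b)) := by rw [← htγδ]; ring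
  linarith

/-- For fixed nonnegative payoffs `x1, x2`, the indifference price
`γ ↦ g_γ(x1, x2)` is an antitone (non-increasing) function of the risk aversion `γ`
on `(0, ∞)`. -/
theorem indiff_price_antitone_in_risk_aversion
    (u d q p1 p2 p3 p4 x1 x2 : ℝ)
    (hd0 : 0 < d) (hd1 : d < 1) (hu : 1 < u)
    (hp1 : 0 < p1) (hp2 : 0 < p2) (hp3 : 0 < p3) (hp4 : 0 < p4)
    (hsum : p1 + p2 + p3 + p4 = 1)
    (hq : q = (1 - d) / (u - d))
    (hx1 : 0 ≤ x1) (hx2 : 0 ≤ x2) :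
    AntitoneOn (fun γ : ℝ => indiffPrice p1 p2 p3 p4 q γ x1 x2) (Set.Ioi 0) := by
  have hud : 0 < u - d := by linarith
  have hq0 : 0 < q := by rw [hq]; exact div_pos (by linarith) hud
  have hq1 : q < 1 := by
    rw [hq, div_lt_one hud]; linarith
  intro γ hγ δ hδ hγδ
  have hγ0 : (0:ℝ) < γ := hγ
  simp only [indiffPrice]
  have h12 := aux_certainty_equiv_anti p1 p2 x1 x2 hp1 hp2 hx1 hx2 hγ0 hγδ
  have h34 := aux_certainty_equiv_anti p3 p4 x1 x2 hp3 hp4 hx1 hx2 hγ0 hγδ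
  have e1 : ∀ r s L : ℝ, r / s * L = r * (1/s * L) := by
    intro r s L
    rw [div_eq_mul_inv, one_div, mul_assoc]
  rw [e1 q δ, e1 q γ, e1 (1-q) δ, e1 (1-q) γ]
  exact add_le_add (mul_le_mul_of_nonneg_left h12 hq0.le)
    (mul_le_mul_of_nonneg_left h34 (by linarith))
end

section
/- For fixed x1, x2 ∈ ℝ, the indifference price converges to the super-replication (smallest arbitrage-free) price as risk aversion tends to infinity: lim_{γ → ∞} g_γ(x1, x2) = min(x1, x2). In particular, for the payoff of a call option on the non-traded asset, where x1 = (hY_0 − K)^+ ≥ x2 = (ℓY_0 − K)^+, the limit equals (ℓY_0 − K)^+. -/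
open Filter

private lemma aux_tendsto (a b : ℝ) (ha : 0 < a) (hb : 0 < b) (x1 x2 : ℝ) :
    Tendsto (fun γ : ℝ => (1 / γ) *
      Real.log ((a + b) / (a * Real.exp (-(γ * x1)) + b * Real.exp (-(γ * x2)))))
      atTop (nhds (min x1 x2)) := by
  set m := min x1 x2 with hm
  have hab : 0 < a + b := by linarith
  have hmin : 0 < min a b := lt_min ha hb
  set C := Real.log ((a + b) / min a b) with hC
  have hupper : Tendsto (fun γ : ℝ => m + C / γ) atTop (nhds m) := by
    have h0 : Tendsto (fun γ : ℝ => C / γ) atTop (nhds 0) := by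
      simpa [div_eq_mul_inv] using tendsto_inv_atTop_zero.const_mul C
    simpa using tendsto_const_nhds.add h0
  apply tendsto_of_tendsto_of_tendsto_of_le_of_le' (tendsto_const_nhds (x := m)) hupper
  · -- lower bound eventually
    filter_upwards [eventually_gt_atTop 0] with γ hγ
    have hD : 0 < a * Real.exp (-(γ * x1)) + b * Real.exp (-(γ * x2)) :=
      add_pos (mul_pos ha (Real.exp_pos _)) (mul_pos hb (Real.exp_pos _))
    have hDle : a * Real.exp (-(γ * x1)) + b * Real.exp (-(γ * x2)) ≤ (a + b) * Real.exp (-(γ * m)) := by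
      have h1 : Real.exp (-(γ * x1)) ≤ Real.exp (-(γ * m)) := by
        apply Real.exp_le_exp.2; nlinarith [min_le_left x1 x2]
      have h2 : Real.exp (-(γ * x2)) ≤ Real.exp (-(γ * m)) := by
        apply Real.exp_le_exp.2; nlinarith [min_le_right x1 x2]
      nlinarith
    have hR : Real.exp (γ * m) ≤ (a + b) / (a * Real.exp (-(γ * x1)) + b * Real.exp (-(γ * x2))) := by
      rw [le_div_iff₀ hD]
      calc Real.exp (γ * m) * (a * Real.exp (-(γ * x1)) + b * Real.exp (-(γ * x2)))
          ≤ Real.exp (γ * m) * ((a + b) * Real.exp (-(γ * m))) := by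
            exact mul_le_mul_of_nonneg_left hDle (Real.exp_pos _).le
        _ = a + b := by rw [← mul_assoc, mul_comm (Real.exp (γ * m)), mul_assoc,
            ← Real.exp_add]; simp
    have hlog : γ * m ≤ Real.log ((a + b) / (a * Real.exp (-(γ * x1)) + b * Real.exp (-(γ * x2)))) := by
      calc γ * m = Real.log (Real.exp (γ * m)) := (Real.log_exp _).symm
        _ ≤ _ := Real.log_le_log (Real.exp_pos _) hR
    calc m = (1 / γ) * (γ * m) := by field_simp
      _ ≤ _ := mul_le_mul_of_nonneg_left hlog (by positivity)
  · -- upper bound eventually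
    filter_upwards [eventually_gt_atTop 0] with γ hγ
    have hD : 0 < a * Real.exp (-(γ * x1)) + b * Real.exp (-(γ * x2)) :=
      add_pos (mul_pos ha (Real.exp_pos _)) (mul_pos hb (Real.exp_pos _))
    have hDge : min a b * Real.exp (-(γ * m)) ≤ a * Real.exp (-(γ * x1)) + b * Real.exp (-(γ * x2)) := by
      rcases le_total x1 x2 with hx | hx
      · have hm' : m = x1 := min_eq_left hx
        rw [hm']
        have : min a b * Real.exp (-(γ * x1)) ≤ a * Real.exp (-(γ * x1)) :=
          mul_le_mul_of_nonneg_right (min_le_left a b) (Real.exp_pos _).le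
        nlinarith [mul_pos hb (Real.exp_pos (-(γ * x2)))]
      · have hm' : m = x2 := min_eq_right hx
        rw [hm']
        have : min a b * Real.exp (-(γ * x2)) ≤ b * Real.exp (-(γ * x2)) :=
          mul_le_mul_of_nonneg_right (min_le_right a b) (Real.exp_pos _).le
        nlinarith [mul_pos ha (Real.exp_pos (-(γ * x1)))]
    have hR : (a + b) / (a * Real.exp (-(γ * x1)) + b * Real.exp (-(γ * x2)))
        ≤ (a + b) / min a b * Real.exp (γ * m) := by
      rw [div_le_iff₀ hD]
      have h1 : (a + b) / min a b * Real.exp (γ * m) * (min a b * Real.exp (-(γ * m)))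
          = a + b := by
        field_simp
        rw [← Real.exp_add]; simp
      calc a + b = (a + b) / min a b * Real.exp (γ * m) * (min a b * Real.exp (-(γ * m))) := h1.symm
        _ ≤ _ := by
          apply mul_le_mul_of_nonneg_left hDge
          positivity
    have hlog : Real.log ((a + b) / (a * Real.exp (-(γ * x1)) + b * Real.exp (-(γ * x2))))
        ≤ C + γ * m := by
      calc Real.log _ ≤ Real.log ((a + b) / min a b * Real.exp (γ * m)) :=
            Real.log_le_log (div_pos hab hD) hR
        _ = C + γ * m := by
            rw [Real.log_mul (by positivity) (Real.exp_pos _).ne', Real.log_exp]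
    have := mul_le_mul_of_nonneg_left hlog (le_of_lt (one_div_pos.2 hγ))
    calc (1 / γ) * Real.log _ ≤ (1 / γ) * (C + γ * m) := this
      _ = m + C / γ := by field_simp; ring
  
/-- As risk aversion tends to infinity, the indifference price
converges to the super-replication (smallest arbitrage-free) price:
`lim_{γ→∞} g_γ(x1,x2) = min(x1,x2)`. In particular, for the payoff of a call option
on the non-traded asset, with `x1 = (hY0−K)^+` and `x2 = (ℓY0−K)^+`, the limit is
`(ℓY0−K)^+`. -/
theorem indiff_price_infinite_risk_aversion_limit
    (u d q p1 p2 p3 p4 : ℝ)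
    (hd0 : 0 < d) (hd1 : d < 1) (hu : 1 < u)
    (hp1 : 0 < p1) (hp2 : 0 < p2) (hp3 : 0 < p3) (hp4 : 0 < p4)
    (hsum : p1 + p2 + p3 + p4 = 1)
    (hq : q = (1 - d) / (u - d)) :
    (∀ x1 x2 : ℝ,
      Tendsto (fun γ : ℝ => indiffPrice p1 p2 p3 p4 q γ x1 x2) atTop
        (nhds (min x1 x2))) ∧
    (∀ h ℓ Y0 K : ℝ, 0 < ℓ → ℓ < 1 → 1 < h → 0 < Y0 →
      Tendsto (fun γ : ℝ =>
          indiffPrice p1 p2 p3 p4 q γ (max (h * Y0 - K) 0) (max (ℓ * Y0 - K) 0))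
        atTop (nhds (max (ℓ * Y0 - K) 0))) := by
  have key : ∀ x1 x2 : ℝ,
      Tendsto (fun γ : ℝ => indiffPrice p1 p2 p3 p4 q γ x1 x2) atTop
        (nhds (min x1 x2)) := by
    intro x1 x2
    have h1 := (aux_tendsto p1 p2 hp1 hp2 x1 x2).const_mul q
    have h2 := (aux_tendsto p3 p4 hp3 hp4 x1 x2).const_mul (1 - q)
    have := h1.add h2
    have heq : q * min x1 x2 + (1 - q) * min x1 x2 = min x1 x2 := by ring
    rw [heq] at this
    refine this.congr (fun γ => ?_)
    unfold indiffPrice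
    ring
  refine ⟨key, fun h ℓ Y0 K hℓ hℓ1 hh hY0 => ?_⟩
  have hle : max (ℓ * Y0 - K) 0 ≤ max (h * Y0 - K) 0 := by
    apply max_le_max _ le_rfl
    nlinarith
  have := key (max (h * Y0 - K) 0) (max (ℓ * Y0 - K) 0)
  rwa [min_eq_right hle] at this
end

section
/- For fixed x1, x2 ≥ 0 and fixed γ > 0, the per-unit indifference price of multiple units of the same claim, a ↦ (1/a)·g_γ(a·x1, a·x2), is an antitone (non-increasing) function of a on (0, ∞); i.e., the per-unit indifference price decreases as the number of options held increases. -/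
/-- Key monotonicity: `t ↦ (1/t) log((w1 e^{t y1} + w2 e^{t y2})/(w1+w2))` is
monotone nondecreasing on `t > 0` (Lyapunov / power-mean inequality). -/
lemma cgf_monotone (w1 w2 y1 y2 s t : ℝ) (hw1 : 0 < w1) (hw2 : 0 < w2)
    (hs : 0 < s) (hst : s ≤ t) :
    (1 / s) * Real.log ((w1 * Real.exp (s * y1) + w2 * Real.exp (s * y2)) / (w1 + w2)) ≤
    (1 / t) * Real.log ((w1 * Real.exp (t * y1) + w2 * Real.exp (t * y2)) / (w1 + w2)) := by
  have ht : 0 < t := lt_of_lt_of_le hs hst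
  set r : ℝ := s / t with hr
  have hr0 : 0 < r := div_pos hs ht
  have hr1 : r ≤ 1 := (div_le_one ht).2 hst
  have hw : 0 < w1 + w2 := by linarith
  set a : ℝ := Real.exp (t * y1)
  set b : ℝ := Real.exp (t * y2)
  have ha : 0 < a := Real.exp_pos _
  have hb : 0 < b := Real.exp_pos _
  have hA : 0 < (w1 * a + w2 * b) / (w1 + w2) := by positivity
  -- exp (s*y) = (exp (t*y))^r
  have hexp1 : Real.exp (s * y1) = a ^ r := by
    rw [Real.rpow_def_of_pos ha, Real.log_exp]
    congr 1; rw [hr]; field_simp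
  have hexp2 : Real.exp (s * y2) = b ^ r := by
    rw [Real.rpow_def_of_pos hb, Real.log_exp]
    congr 1; rw [hr]; field_simp
  -- concavity of x ↦ x^r
  have hconc : (w1 / (w1 + w2)) • (a ^ r) + (w2 / (w1 + w2)) • (b ^ r) ≤
      ((w1 / (w1 + w2)) • a + (w2 / (w1 + w2)) • b) ^ r :=
    (Real.concaveOn_rpow hr0.le hr1).2 (Set.mem_Ici.2 ha.le) (Set.mem_Ici.2 hb.le)
      (by positivity) (by positivity) (by field_simp)
  simp only [smul_eq_mul] at hconc
  have hkey : (w1 * Real.exp (s * y1) + w2 * Real.exp (s * y2)) / (w1 + w2) ≤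
      ((w1 * a + w2 * b) / (w1 + w2)) ^ r := by
    rw [hexp1, hexp2]
    calc (w1 * a ^ r + w2 * b ^ r) / (w1 + w2)
        = w1 / (w1 + w2) * a ^ r + w2 / (w1 + w2) * b ^ r := by ring
      _ ≤ (w1 / (w1 + w2) * a + w2 / (w1 + w2) * b) ^ r := hconc
      _ = ((w1 * a + w2 * b) / (w1 + w2)) ^ r := by ring_nf
  have hS : 0 < (w1 * Real.exp (s * y1) + w2 * Real.exp (s * y2)) / (w1 + w2) := by
    positivity
  have hlog : Real.log ((w1 * Real.exp (s * y1) + w2 * Real.exp (s * y2)) / (w1 + w2)) ≤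
      r * Real.log ((w1 * a + w2 * b) / (w1 + w2)) := by
    rw [← Real.log_rpow hA]
    exact Real.log_le_log hS hkey
  calc (1 / s) * Real.log ((w1 * Real.exp (s * y1) + w2 * Real.exp (s * y2)) / (w1 + w2))
      ≤ (1 / s) * (r * Real.log ((w1 * a + w2 * b) / (w1 + w2))) := by
        apply mul_le_mul_of_nonneg_left hlog; positivity
    _ = (1 / t) * Real.log ((w1 * a + w2 * b) / (w1 + w2)) := by
        rw [hr]; field_simp

/-- Each term of the per-unit indifference price is antitone in `a`. -/
lemma term_anti (p p' γ x1 x2 a b : ℝ) (hp : 0 < p) (hp' : 0 < p') (hγ : 0 < γ)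
    (ha : 0 < a) (hab : a ≤ b) :
    (1 / b) * ((1 / γ) * Real.log ((p + p') /
      (p * Real.exp (-(γ * (b * x1))) + p' * Real.exp (-(γ * (b * x2)))))) ≤
    (1 / a) * ((1 / γ) * Real.log ((p + p') /
      (p * Real.exp (-(γ * (a * x1))) + p' * Real.exp (-(γ * (a * x2)))))) := by
  have hb : 0 < b := lt_of_lt_of_le ha hab
  have key := cgf_monotone p p' (-x1) (-x2) (γ * a) (γ * b) hp hp'
    (by positivity) (by nlinarith)
  have e1 : ∀ c x : ℝ, -(γ * (c * x)) = (γ * c) * (-x) := by intros; ring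
  have hpp' : 0 < p + p' := by linarith
  have hflip : ∀ c : ℝ, 0 < c →
      (1 / c) * ((1 / γ) * Real.log ((p + p') /
        (p * Real.exp (-(γ * (c * x1))) + p' * Real.exp (-(γ * (c * x2)))))) =
      -((1 / (γ * c)) * Real.log ((p * Real.exp ((γ * c) * (-x1)) +
        p' * Real.exp ((γ * c) * (-x2))) / (p + p'))) := by
    intro c hc
    have hD : 0 < p * Real.exp (-(γ * (c * x1))) + p' * Real.exp (-(γ * (c * x2))) := by
      positivity
    have hDeq : p * Real.exp ((γ * c) * (-x1)) + p' * Real.exp ((γ * c) * (-x2)) =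
        p * Real.exp (-(γ * (c * x1))) + p' * Real.exp (-(γ * (c * x2))) := by
      rw [← e1 c x1, ← e1 c x2]
    rw [hDeq, Real.log_div hpp'.ne' hD.ne', Real.log_div hD.ne' hpp'.ne']
    ring
  rw [hflip a ha, hflip b hb]
  exact neg_le_neg key

/-- For fixed nonnegative payoffs `x1, x2` and fixed risk aversion
`γ > 0`, the per-unit indifference price `a ↦ (1/a)·g_γ(a·x1, a·x2)` is antitone
(non-increasing) on `(0, ∞)`: the per-unit price decreases as the number of options
held increases. -/
theorem per_unit_indiff_price_antitone
    (u d q p1 p2 p3 p4 γ x1 x2 : ℝ)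
    (hd0 : 0 < d) (hd1 : d < 1) (hu : 1 < u)
    (hp1 : 0 < p1) (hp2 : 0 < p2) (hp3 : 0 < p3) (hp4 : 0 < p4)
    (hsum : p1 + p2 + p3 + p4 = 1)
    (hq : q = (1 - d) / (u - d))
    (hγ : 0 < γ) (hx1 : 0 ≤ x1) (hx2 : 0 ≤ x2) :
    AntitoneOn (fun a : ℝ => (1 / a) * indiffPrice p1 p2 p3 p4 q γ (a * x1) (a * x2))
      (Set.Ioi 0) := by
  have hq0 : 0 < q := by
    rw [hq]; apply div_pos <;> linarith
  have hq1 : q < 1 := by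
    rw [hq, div_lt_one (by linarith)]; linarith
  intro a ha b hb hab
  simp only [Set.mem_Ioi] at ha hb
  have h1 := term_anti p1 p2 γ x1 x2 a b hp1 hp2 hγ ha hab
  have h2 := term_anti p3 p4 γ x1 x2 a b hp3 hp4 hγ ha hab
  have g1 := mul_le_mul_of_nonneg_left h1 hq0.le
  have g2 := mul_le_mul_of_nonneg_left h2 (by linarith : (0:ℝ) ≤ 1 - q)
  simp only [indiffPrice]
  refine le_trans (le_of_eq ?_) (le_trans (add_le_add g1 g2) (le_of_eq ?_)) <;> ring
end

section
/- For all x1, x2 ∈ ℝ and all γ > 0, the indifference price is bounded below by the super-replication buyer's price and above by the minimal-martingale-measure expectation: min(x1, x2) ≤ g_γ(x1, x2) ≤ q·(p1·x1 + p2·x2)/(p1+p2) + (1−q)·(p3·x1 + p4·x2)/(p3+p4). -/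
lemma log_ratio_bounds (a b γ x1 x2 : ℝ) (ha : 0 < a) (hb : 0 < b) (hγ : 0 < γ) :
    γ * min x1 x2 ≤ Real.log ((a + b) / (a * Real.exp (-(γ * x1)) + b * Real.exp (-(γ * x2)))) ∧
    Real.log ((a + b) / (a * Real.exp (-(γ * x1)) + b * Real.exp (-(γ * x2)))) ≤
      γ * ((a * x1 + b * x2) / (a + b)) := by
  have he1 : 0 < Real.exp (-(γ * x1)) := Real.exp_pos _
  have he2 : 0 < Real.exp (-(γ * x2)) := Real.exp_pos _
  set S := a * Real.exp (-(γ * x1)) + b * Real.exp (-(γ * x2)) with hSdef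
  have hS0 : 0 < S := by positivity
  have hab : 0 < a + b := by linarith
  have hratio : 0 < (a + b) / S := by positivity
  set m := min x1 x2 with hm
  constructor
  · rw [Real.le_log_iff_exp_le hratio, le_div_iff₀ hS0]
    have e1 : Real.exp (γ * m) * Real.exp (-(γ * x1)) = Real.exp (γ * m - γ * x1) := by
      rw [← Real.exp_add]; ring_nf
    have e2 : Real.exp (γ * m) * Real.exp (-(γ * x2)) = Real.exp (γ * m - γ * x2) := by
      rw [← Real.exp_add]; ring_nf
    have h1 : Real.exp (γ * m - γ * x1) ≤ 1 := by
      rw [Real.exp_le_one_iff]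
      have : m ≤ x1 := min_le_left _ _
      nlinarith
    have h2 : Real.exp (γ * m - γ * x2) ≤ 1 := by
      rw [Real.exp_le_one_iff]
      have : m ≤ x2 := min_le_right _ _
      nlinarith
    calc Real.exp (γ * m) * S
        = a * Real.exp (γ * m - γ * x1) + b * Real.exp (γ * m - γ * x2) := by
          rw [hSdef]; rw [← e1, ← e2]; ring
      _ ≤ a * 1 + b * 1 := by
          gcongr
      _ = a + b := by ring
  · set M := (a * x1 + b * x2) / (a + b) with hM
    rw [Real.log_le_iff_le_exp hratio, div_le_iff₀ hS0]
    have e1 : Real.exp (γ * M) * Real.exp (-(γ * x1)) = Real.exp (γ * M - γ * x1) := by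
      rw [← Real.exp_add]; ring_nf
    have e2 : Real.exp (γ * M) * Real.exp (-(γ * x2)) = Real.exp (γ * M - γ * x2) := by
      rw [← Real.exp_add]; ring_nf
    -- convexity of exp
    have hw1 : (0:ℝ) ≤ a / (a + b) := by positivity
    have hw2 : (0:ℝ) ≤ b / (a + b) := by positivity
    have hwsum : a / (a + b) + b / (a + b) = 1 := by field_simp
    have hconv := convexOn_exp.2 (Set.mem_univ (γ * M - γ * x1))
      (Set.mem_univ (γ * M - γ * x2)) hw1 hw2 hwsum
    simp only [smul_eq_mul] at hconv
    have hMe : M * (a + b) = a * x1 + b * x2 := by rw [hM]; field_simp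
    have hcomb : a / (a + b) * (γ * M - γ * x1) + b / (a + b) * (γ * M - γ * x2) = 0 := by
      rw [div_mul_eq_mul_div, div_mul_eq_mul_div, ← add_div, div_eq_zero_iff]
      left
      linear_combination γ * hMe
    rw [hcomb, Real.exp_zero] at hconv
    have key : a + b ≤ a * Real.exp (γ * M - γ * x1) + b * Real.exp (γ * M - γ * x2) := by
      have := mul_le_mul_of_nonneg_left hconv (le_of_lt hab)
      calc a + b = (a + b) * 1 := by ring
        _ ≤ (a + b) * (a / (a + b) * Real.exp (γ * M - γ * x1) +
              b / (a + b) * Real.exp (γ * M - γ * x2)) := this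
        _ = a * Real.exp (γ * M - γ * x1) + b * Real.exp (γ * M - γ * x2) := by
            field_simp
    calc a + b ≤ a * Real.exp (γ * M - γ * x1) + b * Real.exp (γ * M - γ * x2) := key
      _ = Real.exp (γ * M) * S := by rw [hSdef, ← e1, ← e2]; ring

/-- For all `x1, x2 ∈ ℝ` and all `γ > 0`, the indifference price lies
between the super-replication buyer's price and the minimal-martingale-measure
expectation:
`min(x1,x2) ≤ g_γ(x1,x2) ≤ q·(p1x1+p2x2)/(p1+p2) + (1−q)·(p3x1+p4x2)/(p3+p4)`. -/
theorem indiff_price_bounds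
    (u d q p1 p2 p3 p4 : ℝ)
    (hd0 : 0 < d) (hd1 : d < 1) (hu : 1 < u)
    (hp1 : 0 < p1) (hp2 : 0 < p2) (hp3 : 0 < p3) (hp4 : 0 < p4)
    (hsum : p1 + p2 + p3 + p4 = 1)
    (hq : q = (1 - d) / (u - d)) :
    ∀ x1 x2 γ : ℝ, 0 < γ →
      min x1 x2 ≤ indiffPrice p1 p2 p3 p4 q γ x1 x2 ∧
      indiffPrice p1 p2 p3 p4 q γ x1 x2 ≤
        q * (p1 * x1 + p2 * x2) / (p1 + p2) +
        (1 - q) * (p3 * x1 + p4 * x2) / (p3 + p4) := by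
  intro x1 x2 γ hγ
  have hud : 0 < u - d := by linarith
  have hq0 : 0 < q := by rw [hq]; exact div_pos (by linarith) hud
  have hq1 : q < 1 := by
    rw [hq, div_lt_one hud]; linarith
  obtain ⟨hL1, hU1⟩ := log_ratio_bounds p1 p2 γ x1 x2 hp1 hp2 hγ
  obtain ⟨hL2, hU2⟩ := log_ratio_bounds p3 p4 γ x1 x2 hp3 hp4 hγ
  set m := min x1 x2 with hm
  set L1 := Real.log ((p1 + p2) / (p1 * Real.exp (-(γ * x1)) + p2 * Real.exp (-(γ * x2)))) with hL1d
  set L2 := Real.log ((p3 + p4) / (p3 * Real.exp (-(γ * x1)) + p4 * Real.exp (-(γ * x2)))) with hL2d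
  have hqγ : 0 < q / γ := by positivity
  have hq'γ : 0 < (1 - q) / γ := div_pos (by linarith) hγ
  have hγne : γ ≠ 0 := ne_of_gt hγ
  have unfold1 : indiffPrice p1 p2 p3 p4 q γ x1 x2 = (q / γ) * L1 + ((1 - q) / γ) * L2 := rfl
  constructor
  · rw [unfold1]
    have h1 : q * m ≤ (q / γ) * L1 := by
      have := mul_le_mul_of_nonneg_left hL1 (le_of_lt hqγ)
      have e : q / γ * (γ * m) = q * m := by field_simp
      linarith [e ▸ this]
    have h2 : (1 - q) * m ≤ ((1 - q) / γ) * L2 := by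
      have := mul_le_mul_of_nonneg_left hL2 (le_of_lt hq'γ)
      have e : (1 - q) / γ * (γ * m) = (1 - q) * m := by field_simp
      linarith [e ▸ this]
    nlinarith
  · rw [unfold1]
    have h1 : (q / γ) * L1 ≤ q * ((p1 * x1 + p2 * x2) / (p1 + p2)) := by
      have := mul_le_mul_of_nonneg_left hU1 (le_of_lt hqγ)
      have e : q / γ * (γ * ((p1 * x1 + p2 * x2) / (p1 + p2))) =
          q * ((p1 * x1 + p2 * x2) / (p1 + p2)) := by field_simp
      linarith [e ▸ this]
    have h2 : ((1 - q) / γ) * L2 ≤ (1 - q) * ((p3 * x1 + p4 * x2) / (p3 + p4)) := by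
      have := mul_le_mul_of_nonneg_left hU2 (le_of_lt hq'γ)
      have e : (1 - q) / γ * (γ * ((p3 * x1 + p4 * x2) / (p3 + p4))) =
          (1 - q) * ((p3 * x1 + p4 * x2) / (p3 + p4)) := by field_simp
      linarith [e ▸ this]
    have e1 : q * (p1 * x1 + p2 * x2) / (p1 + p2) = q * ((p1 * x1 + p2 * x2) / (p1 + p2)) := by
      ring
    have e2 : (1 - q) * (p3 * x1 + p4 * x2) / (p3 + p4) =
        (1 - q) * ((p3 * x1 + p4 * x2) / (p3 + p4)) := by ring
    rw [e1, e2]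
    linarith
end

section
/- The full-exercise region for multiple American calls grows with the number of options held: for Y_0 > 0, strike K > 0, and γ > 0, if immediate exercise is (weakly) optimal for one option, i.e., (Y_0 − K)^+ ≥ g_γ((hY_0 − K)^+, (ℓY_0 − K)^+), then for every A ≥ 1 immediate exercise of all A options is (weakly) optimal, i.e., A·(Y_0 − K)^+ ≥ g_γ(A·(hY_0 − K)^+, A·(ℓY_0 − K)^+). Consequently, the exercise threshold for A identical American calls (the stock level above which full immediate exercise is optimal) is no higher than the threshold for a single call. -/
lemma key_scaling (p p' a b γ A : ℝ) (hp : 0 < p) (hp' : 0 < p') (hA : 1 ≤ A) :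
    Real.log ((p + p') / (p * Real.exp (-(γ * (A * a))) + p' * Real.exp (-(γ * (A * b))))) ≤
      A * Real.log ((p + p') / (p * Real.exp (-(γ * a)) + p' * Real.exp (-(γ * b)))) := by
  set x := Real.exp (-(γ * a)) with hx
  set y := Real.exp (-(γ * b)) with hy
  have hx0 : 0 < x := Real.exp_pos _
  have hy0 : 0 < y := Real.exp_pos _
  have hS : 0 < p + p' := by linarith
  have hxA : Real.exp (-(γ * (A * a))) = x ^ A := by
    rw [hx, ← Real.exp_mul]; ring_nf
  have hyA : Real.exp (-(γ * (A * b))) = y ^ A := by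
    rw [hy, ← Real.exp_mul]; ring_nf
  rw [hxA, hyA]
  have hD1 : 0 < p * x + p' * y := by positivity
  have hDA : 0 < p * x ^ A + p' * y ^ A := by positivity
  -- convexity of rpow
  have hconv := convexOn_rpow hA
  have key : ((p / (p + p')) * x + (p' / (p + p')) * y) ^ A ≤
      (p / (p + p')) * x ^ A + (p' / (p + p')) * y ^ A := by
    have := hconv.2 (Set.mem_Ici.2 hx0.le) (Set.mem_Ici.2 hy0.le)
      (le_of_lt (by positivity : (0:ℝ) < p / (p + p')))
      (le_of_lt (by positivity : (0:ℝ) < p' / (p + p')))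
      (by field_simp)
    simpa [smul_eq_mul] using this
  have key2 : ((p * x + p' * y) / (p + p')) ^ A ≤ (p * x ^ A + p' * y ^ A) / (p + p') := by
    have e1 : (p * x + p' * y) / (p + p') = (p / (p + p')) * x + (p' / (p + p')) * y := by ring
    have e2 : (p * x ^ A + p' * y ^ A) / (p + p') =
        (p / (p + p')) * x ^ A + (p' / (p + p')) * y ^ A := by ring
    rw [e1, e2]; exact key
  have hlog := Real.log_le_log (by positivity) key2
  rw [Real.log_rpow (by positivity), Real.log_div hD1.ne' hS.ne',
    Real.log_div hDA.ne' hS.ne'] at hlog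
  rw [Real.log_div hS.ne' hDA.ne', Real.log_div hS.ne' hD1.ne']
  nlinarith [hlog]

/-- The full-exercise region for multiple American calls grows with the
number of options held: if immediate exercise is (weakly) optimal for one option,
i.e. `(Y0−K)^+ ≥ g_γ((hY0−K)^+, (ℓY0−K)^+)`, then for every `A ≥ 1` immediate
exercise of all `A` options is (weakly) optimal:
`A·(Y0−K)^+ ≥ g_γ(A·(hY0−K)^+, A·(ℓY0−K)^+)`. Consequently the exercise threshold
for `A` identical calls is no higher than the threshold for a single call. -/
theorem full_exercise_region_grows
    (u d q p1 p2 p3 p4 h ℓ Y0 K γ : ℝ)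
    (hd0 : 0 < d) (hd1 : d < 1) (hu : 1 < u)
    (hℓ0 : 0 < ℓ) (hℓ1 : ℓ < 1) (hh : 1 < h)
    (hp1 : 0 < p1) (hp2 : 0 < p2) (hp3 : 0 < p3) (hp4 : 0 < p4)
    (hsum : p1 + p2 + p3 + p4 = 1)
    (hq : q = (1 - d) / (u - d))
    (hY0 : 0 < Y0) (hK : 0 < K) (hγ : 0 < γ)
    (hone : max (Y0 - K) 0 ≥
      indiffPrice p1 p2 p3 p4 q γ (max (h * Y0 - K) 0) (max (ℓ * Y0 - K) 0)) :
    ∀ A : ℝ, 1 ≤ A →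
      A * max (Y0 - K) 0 ≥
        indiffPrice p1 p2 p3 p4 q γ
          (A * max (h * Y0 - K) 0) (A * max (ℓ * Y0 - K) 0) := by
  intro A hA
  set a := max (h * Y0 - K) 0
  set b := max (ℓ * Y0 - K) 0
  have hq0 : 0 < q := by
    rw [hq]; apply div_pos <;> linarith
  have hq1 : q < 1 := by
    rw [hq]; rw [div_lt_one (by linarith)]; linarith
  have h1 := key_scaling p1 p2 a b γ A hp1 hp2 hA
  have h2 := key_scaling p3 p4 a b γ A hp3 hp4 hA
  have hscale : indiffPrice p1 p2 p3 p4 q γ (A * a) (A * b) ≤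
      A * indiffPrice p1 p2 p3 p4 q γ a b := by
    unfold indiffPrice
    have c1 : 0 ≤ q / γ := by positivity
    have c2 : 0 ≤ (1 - q) / γ := by
      apply div_nonneg <;> linarith
    nlinarith [mul_le_mul_of_nonneg_left h1 c1, mul_le_mul_of_nonneg_left h2 c2]
  calc indiffPrice p1 p2 p3 p4 q γ (A * a) (A * b)
      ≤ A * indiffPrice p1 p2 p3 p4 q γ a b := hscale
    _ ≤ A * max (Y0 - K) 0 := by
        apply mul_le_mul_of_nonneg_left hone (by linarith)
end
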